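/- Fix a > 0, let G⁺ := [a, ∞) × ℝ³ and F⁺ := (0, 1/a] × ℝ³, and let h : G⁺ → F⁺, h(t,x) := (1/t, x/t), which is a homeomorphism. Let f be a causal homeomorphism of G⁺ and set f̂ := h ∘ f ∘ h⁻¹ : F⁺ → F⁺. Then f is asymptotically regular if and only if f̂ is regular in F₀ := {0} × ℝ³ (i.e. for every v ∈ ℝ³ the limit of f̂(s,w) as (s,w) → (0,v) within F⁺ exists), and in that case f⁺(v) equals the second (spatial) component of that limit, i.e. f⁺ = f̂₀. -/

import Mathlib

/-!
By continuity, a causal map preserves simultaneity, so `f (t, x) = (f_T t, f_X (t, x))` where `f_T`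
is an increasing homeomorphism of `[a, ∞)`, and `f` maps the graph of `γ` onto the graph of
`s ↦ f_X (f_T⁻¹ s, γ (f_T⁻¹ s))`. Under `h`, a semitrajectory with asymptotic velocity `v` becomes
a curve in `F⁺` tending to `(0, v)`, and the asymptotic velocity of its image is read off from `f̂`
along that curve; so limits of `f̂` at the points `(0, v)` yield the asymptotic transform.
Conversely, any sequence in `F⁺` tending to `(0, v)` has a subsequence with increasing times
`1 / s`, which can be threaded onto a single semitrajectory of velocity `v` by interpolating
`x / t` piecewise linearly; the asymptotic transform then controls `f̂` along it.
-/

open Filter Topology Set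

noncomputable section

/-- Euclidean 3-space. -/
abbrev E3 : Type := EuclideanSpace ℝ (Fin 3)

/-- `G⁺ := [a, ∞) × ℝ³`, the Galilean space-time restricted to times `t ≥ a`. -/
def Gplus (a : ℝ) : Set (ℝ × E3) := Set.Ici a ×ˢ (Set.univ : Set E3)

/-- `F⁺ := (0, 1/a] × ℝ³`. -/
def Fplus (a : ℝ) : Set (ℝ × E3) := Set.Ioc 0 a⁻¹ ×ˢ (Set.univ : Set E3)

/-- The map `h(t,x) := (1/t, x/t)`, a homeomorphism between `G⁺` and `F⁺`
(its inverse is given by the same formula). -/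
def hMap (p : ℝ × E3) : ℝ × E3 := (p.1⁻¹, p.1⁻¹ • p.2)

/-- The semitrajectory which is the graph of the curve `γ` on `[t₀, ∞)`. -/
def semitraj (t₀ : ℝ) (γ : ℝ → E3) : Set (ℝ × E3) :=
  (fun t => (t, γ t)) '' Set.Ici t₀

/-- `S` is an asymptotically regular semitrajectory of `G⁺` (so with `t₀ ≥ a`) with
asymptotic velocity `v`: the graph of a continuous curve `γ : [t₀, ∞) → ℝ³`, `t₀ ≥ a`,
with `γ(t)/t → v`. -/
def HasAsympVelFrom (a : ℝ) (S : Set (ℝ × E3)) (v : E3) : Prop :=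
  ∃ t₀ : ℝ, a ≤ t₀ ∧ ∃ γ : ℝ → E3, ContinuousOn γ (Set.Ici t₀) ∧ S = semitraj t₀ γ ∧
    Tendsto (fun t : ℝ => t⁻¹ • γ t) atTop (𝓝 v)

/-- `F` is the asymptotic transform of the transformation `f` of `G⁺`: every
asymptotically regular semitrajectory with asymptotic velocity `v` is mapped by `f` to
one with asymptotic velocity `F v`. -/
def IsAsympTransformOn (a : ℝ) (f : ℝ × E3 → ℝ × E3) (F : E3 → E3) : Prop :=
  ∀ (v : E3) (S : Set (ℝ × E3)), HasAsympVelFrom a S v → HasAsympVelFrom a (f '' S) (F v)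

/-- `f` is asymptotically regular (as a transformation of `G⁺`). -/
def AsympRegOn (a : ℝ) (f : ℝ × E3 → ℝ × E3) : Prop :=
  ∃ F : E3 → E3, IsAsympTransformOn a f F

theorem tendsto_atTop_atTop_of_monotoneOn_Ici {α β : Type*} [Preorder α] [LinearOrder β]
    {φ : α → β} {a : α} {b : β} (hmono : MonotoneOn φ (Ici a)) (hsurj : SurjOn φ (Ici a) (Ici b)) :
    Tendsto φ atTop atTop := by
  refine tendsto_atTop.2 fun M => ?_
  obtain ⟨t, ht, hφt⟩ := hsurj (le_max_left b M : b ≤ max b M)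
  filter_upwards [eventually_ge_atTop t] with r hr
  calc M ≤ max b M := le_max_right b M
    _ = φ t := hφt.symm
    _ ≤ φ r := hmono ht (mem_Ici.2 (le_trans ht hr)) hr

theorem fst_apply_eq_of_causal {X Y : Type*} [TopologicalSpace X] [TopologicalSpace Y] {a : ℝ}
    {f : ℝ × X → ℝ × Y} (hcont : ContinuousOn f (Ici a ×ˢ univ))
    (hcausal : ∀ u ∈ Ici a ×ˢ univ, ∀ w ∈ Ici a ×ˢ univ, u.1 < w.1 → (f u).1 < (f w).1)
    {t : ℝ} (ht : a ≤ t) (x y : X) : (f (t, x)).1 = (f (t, y)).1 := by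
  -- `(f (t, y)).1 < (f (s, x)).1` for every `s > t`; let `s` decrease to `t`.
  have key : ∀ x y : X, (f (t, y)).1 ≤ (f (t, x)).1 := by
    intro x y
    have hx : ContinuousWithinAt (fun s => (f (s, x)).1) (Ici a) t :=
      continuous_fst.continuousAt.comp_continuousWithinAt
        (hcont.comp (by fun_prop) (fun s hs => ⟨hs, mem_univ x⟩) t ht)
    refine ge_of_tendsto (hx.mono (Ioi_subset_Ici ht)) ?_
    filter_upwards [self_mem_nhdsWithin] with s hs
    exact (hcausal (t, y) ⟨ht, mem_univ y⟩ (s, x) ⟨ht.trans (le_of_lt hs), mem_univ x⟩ hs).le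
  exact (key y x).antisymm (key x y)

theorem StrictMono.exists_forall_mem_Ico_iff {α : Type*} [LinearOrder α] [NoMaxOrder α]
    {τ : ℕ → α} (hτ : StrictMono τ) (hτ_top : Tendsto τ atTop atTop) :
    ∃ k : α → ℕ, ∀ n t, τ 0 ≤ t → (t ∈ Ico (τ n) (τ (n + 1)) ↔ k t = n) := by
  have hex : ∀ t, ∃ n, t < τ (n + 1) := fun t =>
    ((hτ_top.comp (tendsto_add_atTop_nat 1)).eventually_gt_atTop t).exists
  classical
  refine ⟨fun t => Nat.find (hex t), fun n t ht => ⟨fun ⟨h₁, h₂⟩ => ?_, ?_⟩⟩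
  · exact (Nat.find_eq_iff _).2 ⟨h₂, fun m hm => not_lt.2 (h₁.trans' (hτ.monotone hm))⟩
  · rintro rfl
    refine ⟨?_, Nat.find_spec (hex t)⟩
    show τ (Nat.find (hex t)) ≤ t
    cases hm : Nat.find (hex t) with
    | zero => exact ht
    | succ m => exact not_lt.1 (Nat.find_min (hex t) (by omega : m < Nat.find (hex t)))

theorem exists_continuousOn_interpolating {E : Type*} [NormedAddCommGroup E] [NormedSpace ℝ E]
    {τ : ℕ → ℝ} (hτ : StrictMono τ) (hτ_top : Tendsto τ atTop atTop) {w : ℕ → E} {v : E}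
    (hw : Tendsto w atTop (𝓝 v)) :
    ∃ u : ℝ → E, ContinuousOn u (Ici (τ 0)) ∧ (∀ n, u (τ n) = w n) ∧ Tendsto u atTop (𝓝 v) := by
  obtain ⟨k, hk⟩ := hτ.exists_forall_mem_Ico_iff hτ_top
  have hk_mem : ∀ {t}, τ 0 ≤ t → t ∈ Ico (τ (k t)) (τ (k t + 1)) := fun ht => (hk _ _ ht).2 rfl
  have hτ₀ : ∀ n, τ 0 ≤ τ n := fun n => hτ.monotone n.zero_le
  let φ : ℕ → ℝ → E := fun n t =>
    AffineMap.lineMap (w n) (w (n + 1)) ((t - τ n) / (τ (n + 1) - τ n))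
  let u : ℝ → E := fun t => φ (k t) t
  have hu_node : ∀ n, u (τ n) = w n := fun n => by
    simp [u, φ, (hk n (τ n) (hτ₀ n)).1 ⟨le_rfl, hτ n.lt_succ_self⟩]
  have hu_piece : ∀ n, EqOn u (φ n) (Icc (τ n) (τ (n + 1))) := by
    rintro n t ⟨h₁, h₂⟩
    rcases h₂.lt_or_eq with h₂ | rfl
    · simp only [u, (hk n t ((hτ₀ n).trans h₁)).1 ⟨h₁, h₂⟩]
    · simp [hu_node, φ, div_self (sub_ne_zero.2 (hτ n.lt_succ_self).ne')]
  refine ⟨u, ?_, hu_node, ?_⟩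
  · have hlf : LocallyFinite fun n => Icc (τ n) (τ (n + 1)) := by
      intro t
      refine ⟨Iio (t + 1), Iio_mem_nhds (lt_add_one t), ?_⟩
      have : ∀ᶠ n in cofinite, t + 1 ≤ τ n :=
        Nat.cofinite_eq_atTop ▸ hτ_top.eventually_ge_atTop (t + 1)
      refine (eventually_cofinite.1 this).subset ?_
      rintro n ⟨s, ⟨hs, -⟩, hs'⟩
      exact not_le.2 (hs.trans_lt hs')
    refine (hlf.continuousOn_iUnion (fun _ => isClosed_Icc) fun n => ?_).mono
      fun t ht => mem_iUnion.2 ⟨k t, Ico_subset_Icc_self (hk_mem ht)⟩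
    exact ((AffineMap.lineMap_continuous).comp (by fun_prop)).continuousOn.congr (hu_piece n)
  · -- `u t` lies on a segment between two late nodes, hence in any closed ball containing them.
    refine Metric.nhds_basis_closedBall.tendsto_right_iff.2 fun ε hε => ?_
    obtain ⟨N, hN⟩ := eventually_atTop.1 (hw.eventually (Metric.closedBall_mem_nhds v hε))
    filter_upwards [eventually_ge_atTop (τ N)] with t ht
    obtain ⟨h₁, h₂⟩ := hk_mem ((hτ₀ N).trans ht)
    have hN_le : N ≤ k t := by
      by_contra! h
      exact (ht.trans_lt h₂).not_ge (hτ.monotone h)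
    have hθ : (t - τ (k t)) / (τ (k t + 1) - τ (k t)) ∈ Icc (0 : ℝ) 1 :=
      ⟨div_nonneg (by linarith) (by linarith), div_le_one_of_le₀ (by linarith) (by linarith)⟩
    exact (convex_closedBall v ε).segment_subset (hN _ hN_le) (hN _ (hN_le.trans (k t).le_succ))
      (lineMap_mem_segment ℝ _ _ hθ)

theorem mem_Gplus {a : ℝ} {p : ℝ × E3} : p ∈ Gplus a ↔ a ≤ p.1 := by
  simp [Gplus]

theorem mk_mem_Gplus {a t : ℝ} (ht : a ≤ t) (x : E3) : (t, x) ∈ Gplus a :=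
  mem_Gplus.2 ht

theorem mem_Fplus {a : ℝ} {p : ℝ × E3} : p ∈ Fplus a ↔ 0 < p.1 ∧ p.1 ≤ a⁻¹ := by
  simp [Fplus]

theorem hMap_hMap {p : ℝ × E3} (hp : p.1 ≠ 0) : hMap (hMap p) = p := by
  simp [hMap, smul_smul, hp]

theorem tendsto_hMap_graph {a : ℝ} (ha : 0 < a) {γ : ℝ → E3} {v : E3}
    (hγ : Tendsto (fun t => t⁻¹ • γ t) atTop (𝓝 v)) :
    Tendsto (fun t => hMap (t, γ t)) atTop (𝓝[Fplus a] (0, v)) := by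
  refine tendsto_nhdsWithin_iff.2 ⟨tendsto_inv_atTop_zero.prodMk_nhds hγ, ?_⟩
  filter_upwards [eventually_ge_atTop a] with t ht
  exact mem_Fplus.2 ⟨inv_pos.2 (ha.trans_le ht), inv_anti₀ ha ht⟩

structure IsCausalHomeomorph (a : ℝ) (f finv : ℝ × E3 → ℝ × E3) : Prop where
  bijOn : BijOn f (Gplus a) (Gplus a)
  invOn : InvOn finv f (Gplus a) (Gplus a)
  continuousOn : ContinuousOn f (Gplus a)
  continuousOn_inv : ContinuousOn finv (Gplus a)
  causal : ∀ u ∈ Gplus a, ∀ w ∈ Gplus a, u.1 < w.1 → (f u).1 < (f w).1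

/-- The paper's `f_T`, read off on the time axis `x = 0`. -/
def timeMap (f : ℝ × E3 → ℝ × E3) (t : ℝ) : ℝ := (f (t, 0)).1

def imageCurve (f finv : ℝ × E3 → ℝ × E3) (γ : ℝ → E3) (s : ℝ) : E3 :=
  (f (timeMap finv s, γ (timeMap finv s))).2

namespace IsCausalHomeomorph

variable {a : ℝ} {f finv : ℝ × E3 → ℝ × E3}

theorem fst_apply (hf : IsCausalHomeomorph a f finv) {t : ℝ} (ht : a ≤ t) (x : E3) :
    (f (t, x)).1 = timeMap f t :=
  fst_apply_eq_of_causal hf.continuousOn hf.causal ht x 0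

theorem fst_apply' (hf : IsCausalHomeomorph a f finv) {p : ℝ × E3} (hp : p ∈ Gplus a) :
    (f p).1 = timeMap f p.1 :=
  hf.fst_apply (mem_Gplus.1 hp) p.2

theorem strictMonoOn_timeMap (hf : IsCausalHomeomorph a f finv) :
    StrictMonoOn (timeMap f) (Ici a) := fun _ hs _ ht hst =>
  hf.causal _ (mk_mem_Gplus hs 0) _ (mk_mem_Gplus ht 0) hst

theorem mapsTo_timeMap (hf : IsCausalHomeomorph a f finv) :
    MapsTo (timeMap f) (Ici a) (Ici a) := fun _ ht =>
  mem_Gplus.1 (hf.bijOn.mapsTo (mk_mem_Gplus ht 0))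

theorem continuousOn_timeMap (hf : IsCausalHomeomorph a f finv) :
    ContinuousOn (timeMap f) (Ici a) :=
  continuous_fst.comp_continuousOn
    (hf.continuousOn.comp (by fun_prop) fun _ ht => mk_mem_Gplus ht 0)

theorem symm (hf : IsCausalHomeomorph a f finv) : IsCausalHomeomorph a finv f where
  bijOn := hf.bijOn.symm hf.invOn.symm
  invOn := hf.invOn.symm
  continuousOn := hf.continuousOn_inv
  continuousOn_inv := hf.continuousOn
  causal := by
    have hmaps := (hf.bijOn.symm hf.invOn.symm).mapsTo
    intro p hp q hq hpq
    by_contra! hle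
    have h := hf.strictMonoOn_timeMap.monotoneOn (mem_Gplus.1 (hmaps hq))
      (mem_Gplus.1 (hmaps hp)) hle
    rw [← hf.fst_apply' (hmaps hq), ← hf.fst_apply' (hmaps hp), hf.invOn.2 hq,
      hf.invOn.2 hp] at h
    exact h.not_gt hpq

theorem leftInvOn_timeMap (hf : IsCausalHomeomorph a f finv) :
    LeftInvOn (timeMap finv) (timeMap f) (Ici a) := fun t ht => by
  rw [← hf.symm.fst_apply (hf.mapsTo_timeMap ht) (f (t, 0)).2]
  exact congrArg Prod.fst (hf.invOn.1 (mk_mem_Gplus ht 0))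

theorem invOn_timeMap (hf : IsCausalHomeomorph a f finv) :
    InvOn (timeMap finv) (timeMap f) (Ici a) (Ici a) :=
  ⟨hf.leftInvOn_timeMap, hf.symm.leftInvOn_timeMap⟩

theorem tendsto_timeMap_atTop (hf : IsCausalHomeomorph a f finv) :
    Tendsto (timeMap f) atTop atTop :=
  tendsto_atTop_atTop_of_monotoneOn_Ici hf.strictMonoOn_timeMap.monotoneOn
    (hf.invOn_timeMap.2.surjOn hf.symm.mapsTo_timeMap)

theorem mapsTo_timeMap_inv_Ici (hf : IsCausalHomeomorph a f finv) {t₀ : ℝ} (ht₀ : a ≤ t₀) :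
    MapsTo (timeMap finv) (Ici (timeMap f t₀)) (Ici t₀) := fun s hs => by
  have hs' : a ≤ s := (hf.mapsTo_timeMap ht₀).trans hs
  have h := hf.symm.strictMonoOn_timeMap.monotoneOn (hf.mapsTo_timeMap ht₀) hs' hs
  rwa [hf.leftInvOn_timeMap ht₀] at h

theorem image_semitraj (hf : IsCausalHomeomorph a f finv) {t₀ : ℝ} (ht₀ : a ≤ t₀) (γ : ℝ → E3) :
    f '' semitraj t₀ γ = semitraj (timeMap f t₀) (imageCurve f finv γ) := by
  ext q
  constructor
  · rintro ⟨_, ⟨r, hr, rfl⟩, rfl⟩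
    have har : a ≤ r := ht₀.trans hr
    refine ⟨timeMap f r, hf.strictMonoOn_timeMap.monotoneOn ht₀ har hr, ?_⟩
    simp only [imageCurve, hf.leftInvOn_timeMap har]
    exact Prod.ext (hf.fst_apply har _).symm rfl
  · rintro ⟨s, hs, rfl⟩
    have hr := hf.mapsTo_timeMap_inv_Ici ht₀ hs
    refine ⟨_, ⟨_, hr, rfl⟩, Prod.ext ?_ rfl⟩
    rw [hf.fst_apply (ht₀.trans hr),
      hf.invOn_timeMap.2 (mem_Ici.2 (le_trans (hf.mapsTo_timeMap ht₀) hs))]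

theorem continuousOn_imageCurve (hf : IsCausalHomeomorph a f finv) {t₀ : ℝ} (ht₀ : a ≤ t₀)
    {γ : ℝ → E3} (hγ : ContinuousOn γ (Ici t₀)) :
    ContinuousOn (imageCurve f finv γ) (Ici (timeMap f t₀)) := by
  have hmaps := hf.mapsTo_timeMap_inv_Ici ht₀
  have hψ : ContinuousOn (timeMap finv) (Ici (timeMap f t₀)) :=
    hf.symm.continuousOn_timeMap.mono fun _ hs => mem_Ici.2 (le_trans (hf.mapsTo_timeMap ht₀) hs)
  exact continuous_snd.comp_continuousOn (hf.continuousOn.comp (hψ.prodMk (hγ.comp hψ hmaps))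
    fun s hs => mk_mem_Gplus (ht₀.trans (hmaps hs)) _)

theorem tendsto_smul_imageCurve (hf : IsCausalHomeomorph a f finv) (ha : 0 < a) {γ : ℝ → E3}
    {v : E3} {L : ℝ × E3} (hγ : Tendsto (fun t => t⁻¹ • γ t) atTop (𝓝 v))
    (hL : Tendsto (fun p => hMap (f (hMap p))) (𝓝[Fplus a] (0, v)) (𝓝 L)) :
    Tendsto (fun s => s⁻¹ • imageCurve f finv γ s) atTop (𝓝 L.2) := by
  refine ((continuous_snd.tendsto L).comp (hL.comp ((tendsto_hMap_graph ha hγ).comp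
    hf.symm.tendsto_timeMap_atTop))).congr' ?_
  filter_upwards [eventually_ge_atTop a] with s hs
  have hr : a ≤ timeMap finv s := hf.symm.mapsTo_timeMap hs
  simp only [Function.comp_apply, imageCurve]
  rw [hMap_hMap (p := (timeMap finv s, γ (timeMap finv s))) (ha.trans_le hr).ne', hMap,
    hf.fst_apply hr, hf.invOn_timeMap.2 hs]

theorem isAsympTransformOn (hf : IsCausalHomeomorph a f finv) (ha : 0 < a) {L : E3 → ℝ × E3}
    (hL : ∀ v, Tendsto (fun p => hMap (f (hMap p))) (𝓝[Fplus a] (0, v)) (𝓝 (L v))) :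
    IsAsympTransformOn a f fun v => (L v).2 := by
  rintro v _ ⟨t₀, ht₀, γ, hγ, rfl, hv⟩
  exact ⟨timeMap f t₀, hf.mapsTo_timeMap ht₀, imageCurve f finv γ,
    hf.continuousOn_imageCurve ht₀ hγ, hf.image_semitraj ht₀ γ,
    hf.tendsto_smul_imageCurve ha hv (hL v)⟩

theorem tendsto_hMap_apply_of_isAsympTransformOn (hf : IsCausalHomeomorph a f finv) (ha : 0 < a)
    {F : E3 → E3} (hF : IsAsympTransformOn a f F) {v : E3} {q : ℕ → ℝ × E3}
    (hq₀ : a ≤ (q 0).1) (hq_mono : StrictMono fun n => (q n).1)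
    (hq_top : Tendsto (fun n => (q n).1) atTop atTop)
    (hq_vel : Tendsto (fun n => (q n).1⁻¹ • (q n).2) atTop (𝓝 v)) :
    Tendsto (fun n => hMap (f (q n))) atTop (𝓝 (0, F v)) := by
  obtain ⟨u, hu, hu_node, hu_lim⟩ := exists_continuousOn_interpolating hq_mono hq_top hq_vel
  have hq_ge : ∀ n, a ≤ (q n).1 := fun n => hq₀.trans (hq_mono.monotone n.zero_le)
  have hS : HasAsympVelFrom a (semitraj (q 0).1 fun t => t • u t) v := by
    refine ⟨_, hq₀, fun t => t • u t, continuousOn_id.smul hu, rfl, hu_lim.congr' ?_⟩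
    filter_upwards [eventually_gt_atTop 0] with t ht
    exact (inv_smul_smul₀ ht.ne' _).symm
  have hq_mem : ∀ n, q n ∈ semitraj (q 0).1 fun t => t • u t := fun n =>
    ⟨(q n).1, hq_mono.monotone n.zero_le, by
      simp only [hu_node, smul_inv_smul₀ (ha.trans_le (hq_ge n)).ne']⟩
  obtain ⟨t₁, -, γ', -, himage, hγ'⟩ := hF v _ hS
  have hfq : ∀ n, (f (q n)).2 = γ' (f (q n)).1 := fun n => by
    obtain ⟨s, -, hs⟩ : f (q n) ∈ semitraj t₁ γ' := himage ▸ mem_image_of_mem f (hq_mem n)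
    rw [← hs]
  have htime : Tendsto (fun n => (f (q n)).1) atTop atTop :=
    (hf.tendsto_timeMap_atTop.comp hq_top).congr fun n =>
      (hf.fst_apply' (mem_Gplus.2 (hq_ge n))).symm
  refine ((tendsto_inv_atTop_zero.comp htime).prodMk_nhds (hγ'.comp htime)).congr fun n => ?_
  simp only [hMap, Function.comp_apply, hfq n]

theorem tendsto_hMap_comp_of_isAsympTransformOn (hf : IsCausalHomeomorph a f finv) (ha : 0 < a)
    {F : E3 → E3} (hF : IsAsympTransformOn a f F) (v : E3) :
    Tendsto (fun p => hMap (f (hMap p))) (𝓝[Fplus a] (0, v)) (𝓝 (0, F v)) := by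
  refine tendsto_of_subseq_tendsto fun p hp => ?_
  obtain ⟨hp_lim, hp_mem⟩ := tendsto_nhdsWithin_iff.1 hp
  have htime : Tendsto (fun n => (p n).1⁻¹) atTop atTop :=
    tendsto_inv_nhdsGT_zero.comp (tendsto_nhdsWithin_iff.2
      ⟨(continuous_fst.tendsto _).comp hp_lim, hp_mem.mono fun _ hn => (mem_Fplus.1 hn).1⟩)
  -- A subsequence of points of `F⁺` along which the times `1 / s` increase strictly.
  obtain ⟨φ, hφ, hφ_prop⟩ := extraction_of_frequently_atTop
    ((frequently_high_scores htime).and_eventually hp_mem)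
  have hφ_mem n := (hφ_prop n).2
  have hpos : ∀ n, (p (φ n)).1 ≠ 0 := fun n => (mem_Fplus.1 (hφ_mem n)).1.ne'
  refine ⟨φ, hf.tendsto_hMap_apply_of_isAsympTransformOn ha hF (q := fun n => hMap (p (φ n)))
    ?_ (fun m n hmn => (hφ_prop n).1 _ (hφ hmn)) (htime.comp hφ.tendsto_atTop) ?_⟩
  · obtain ⟨h₀, h₁⟩ := mem_Fplus.1 (hφ_mem 0)
    exact (le_inv_comm₀ ha h₀).2 h₁
  · refine (((continuous_snd.tendsto _).comp hp_lim).comp hφ.tendsto_atTop).congr fun n => ?_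
    exact (congrArg Prod.snd (hMap_hMap (hpos n))).symm

end IsCausalHomeomorph

/-- Fix `a > 0`, `G⁺ := [a, ∞) × ℝ³`, `F⁺ := (0, 1/a] × ℝ³`, and the
homeomorphism `h : G⁺ → F⁺`, `h(t,x) := (1/t, x/t)`.  Let `f` be a causal homeomorphism
of `G⁺` and `f̂ := h ∘ f ∘ h⁻¹ : F⁺ → F⁺`.  Then `f` is asymptotically regular if and
only if `f̂` is regular in `F₀ = {0} × ℝ³` (for every `v` the limit of `f̂(s,w)` as
`(s,w) → (0,v)` within `F⁺` exists), and in that case `f⁺(v)` is the second (spatial)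
component of that limit (whose first component is `0`), i.e. `f⁺ = f̂₀`. -/
theorem stmt11 (a : ℝ) (ha : 0 < a) (f finv : ℝ × E3 → ℝ × E3)
    (hbij : Set.BijOn f (Gplus a) (Gplus a))
    (hinv : Set.InvOn finv f (Gplus a) (Gplus a))
    (hcont : ContinuousOn f (Gplus a))
    (hcont' : ContinuousOn finv (Gplus a))
    (hcausal : ∀ u ∈ Gplus a, ∀ w ∈ Gplus a, u.1 < w.1 → (f u).1 < (f w).1) :
    (AsympRegOn a f ↔
      ∀ v : E3, ∃ L : ℝ × E3,
        Tendsto (fun p => hMap (f (hMap p)))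
          (nhdsWithin ((0 : ℝ), v) (Fplus a)) (𝓝 L)) ∧
    (∀ F : E3 → E3, IsAsympTransformOn a f F →
      ∀ v : E3, Tendsto (fun p => hMap (f (hMap p)))
        (nhdsWithin ((0 : ℝ), v) (Fplus a)) (𝓝 ((0 : ℝ), F v))) := by
  have hf : IsCausalHomeomorph a f finv := ⟨hbij, hinv, hcont, hcont', hcausal⟩
  have hlim := fun F (hF : IsAsympTransformOn a f F) =>
    hf.tendsto_hMap_comp_of_isAsympTransformOn ha hF
  refine ⟨⟨fun ⟨F, hF⟩ v => ⟨_, hlim F hF v⟩, fun hL => ?_⟩, hlim⟩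
  choose L hL using hL
  exact ⟨_, hf.isAsympTransformOn ha hL⟩
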